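/- Let l ≥ 1 and z_1,…,z_l ∈ ℂ with z_i − z_j ∉ ℤ for i ≠ j. Let B be the subalgebra of differential operators on ℂ* generated by X (multiplication by X), E = X∂, and L = X^{-1}(E − z_1)⋯(E − z_l). Then B equals the algebra of all differential operators on ℂ* which preserve X^{z_i}·ℂ[X] for every i = 1,…,l. -/
import Mathlib


/- STATEMENT 0: Let l ≥ 1 and z_1,…,z_l ∈ ℂ with z_i − z_j ∉ ℤ for i ≠ j.
Let B be the subalgebra of differential operators on ℂ* generated by X, E = X∂,
and L = X^{-1}(E − z_1)⋯(E − z_l).  Then B equals the algebra of all differential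
operators on ℂ* which preserve X^{z_i}·ℂ[X] for every i.

Differential operators on ℂ* are modelled as endomorphisms of the module with
basis {X^u : u ∈ ℂ}; the full algebra of differential operators is the
subalgebra generated by X, X⁻¹ and ∂. -/

noncomputable section

/-- module with basis X^u, u ∈ ℂ -/
abbrev ExpMod := ℂ →₀ ℂ

/-- multiplication by X -/
noncomputable def Xop : Module.End ℂ ExpMod := Finsupp.lmapDomain ℂ ℂ (fun u => u + 1)

/-- multiplication by X⁻¹ -/
noncomputable def Xinv : Module.End ℂ ExpMod := Finsupp.lmapDomain ℂ ℂ (fun u => u - 1)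

/-- the derivative ∂ : X^u ↦ u X^{u−1} -/
noncomputable def Dop : Module.End ℂ ExpMod :=
  Finsupp.lsum ℂ (fun u => LinearMap.toSpanSingleton ℂ ExpMod
    (u • Finsupp.single (u - 1) (1 : ℂ)))

/-- the Euler operator E = X∂ -/
noncomputable def Eop : Module.End ℂ ExpMod := Xop * Dop

/-- L = X^{-1}(E−z_1)⋯(E−z_l) -/
noncomputable def Lop (l : ℕ) (z : Fin l → ℂ) : Module.End ℂ ExpMod :=
  Xinv * ((List.ofFn (fun i : Fin l => Eop - z i • (1 : Module.End ℂ ExpMod))).prod)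

/-- the subspace X^z·ℂ[X] -/
noncomputable def XzPoly (z : ℂ) : Submodule ℂ ExpMod :=
  Submodule.span ℂ {f | ∃ n : ℕ, f = Finsupp.single (z + n) (1 : ℂ)}

open Polynomial

noncomputable def op (r : ℤ) (g : ℂ[X]) : Module.End ℂ ExpMod :=
  Finsupp.lsum ℂ (fun u => LinearMap.toSpanSingleton ℂ ExpMod
    (g.eval u • Finsupp.single (u + (r : ℂ)) 1))

lemma op_single (r : ℤ) (g : ℂ[X]) (u c : ℂ) :
    op r g (Finsupp.single u c) = (c * g.eval u) • Finsupp.single (u + (r : ℂ)) 1 := by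
  simp [op, mul_comm c, mul_smul]

lemma op_mul (r s : ℤ) (g h : ℂ[X]) :
    op r g * op s h = op (r + s) (g.comp (X + C (s : ℂ)) * h) := by
  apply Finsupp.lhom_ext
  intro u c
  show op r g (op s h (Finsupp.single u c)) = _
  rw [op_single, map_smul, op_single, op_single]
  rw [smul_smul]
  congr 1
  · simp [eval_comp]; ring
  · congr 1; push_cast; ring

lemma op_one : op 0 1 = 1 := by
  apply Finsupp.lhom_ext
  intro u c
  rw [op_single]
  simp

noncomputable def opl (r : ℤ) : ℂ[X] →ₗ[ℂ] Module.End ℂ ExpMod where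
  toFun := op r
  map_add' g h := by
    apply Finsupp.lhom_ext
    intro u c
    show op r (g + h) (Finsupp.single u c) = (op r g + op r h) (Finsupp.single u c)
    rw [LinearMap.add_apply, op_single, op_single, op_single]
    rw [← add_smul]
    congr 1
    simp [mul_add]
  map_smul' a g := by
    apply Finsupp.lhom_ext
    intro u c
    show op r (a • g) (Finsupp.single u c) = (a • op r g) (Finsupp.single u c)
    rw [LinearMap.smul_apply, op_single, op_single, smul_smul]
    congr 1
    simp
    ring

noncomputable def Psi : (ℤ →₀ ℂ[X]) →ₗ[ℂ] Module.End ℂ ExpMod := Finsupp.lsum ℂ opl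

lemma Psi_single (r : ℤ) (g : ℂ[X]) : Psi (Finsupp.single r g) = op r g := by
  rw [Psi, Finsupp.lsum_single]; rfl

lemma Xop_eq : Xop = op 1 1 := by
  apply Finsupp.lhom_ext
  intro u c
  rw [op_single]
  simp [Xop, Finsupp.smul_single]

lemma Xinv_eq : Xinv = op (-1) 1 := by
  apply Finsupp.lhom_ext
  intro u c
  rw [op_single]
  simp [Xinv, Finsupp.smul_single, sub_eq_add_neg]

lemma Dop_eq : Dop = op (-1) X := by
  apply Finsupp.lhom_ext
  intro u c
  rw [op_single]
  simp [Dop, Finsupp.smul_single, sub_eq_add_neg, smul_smul, mul_comm]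

lemma Eop_eq : Eop = op 0 X := by
  rw [Eop, Xop_eq, Dop_eq, op_mul]
  norm_num [one_comp]
lemma op_zero_mul (g h : ℂ[X]) : op 0 g * op 0 h = op 0 (g * h) := by
  rw [op_mul]
  norm_num

lemma op_C (a : ℂ) : op 0 (C a) = a • 1 := by
  apply Finsupp.lhom_ext
  intro u c
  rw [op_single]
  simp [Finsupp.smul_single, mul_comm]

lemma op_list_prod (gs : List ℂ[X]) : (gs.map (op 0)).prod = op 0 gs.prod := by
  induction gs with
  | nil => simp [op_one]
  | cons g gs ih => simp [ih, op_zero_mul]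

lemma Lop_eq (l : ℕ) (z : Fin l → ℂ) :
    Lop l z = op (-1) (∏ i : Fin l, (X - C (z i))) := by
  have h1 : ∀ i : Fin l, Eop - z i • (1 : Module.End ℂ ExpMod) = op 0 (X - C (z i)) := by
    intro i
    have : op 0 (X - C (z i)) = opl 0 X - opl 0 (C (z i)) := (map_sub (opl 0) _ _)
    rw [this]
    show _ = op 0 X - op 0 (C (z i))
    rw [Eop_eq, op_C]
  have h2 : (List.ofFn (fun i : Fin l => Eop - z i • (1 : Module.End ℂ ExpMod)))
      = List.map (op 0) (List.ofFn (fun i : Fin l => X - C (z i))) := by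
    rw [List.map_ofFn]
    congr 1
    funext i
    exact h1 i
  rw [Lop, h2, op_list_prod, List.prod_ofFn, Xinv_eq, op_mul]
  norm_num [one_comp]
lemma op_X_pow (n : ℕ) : op 0 (X ^ n) = Eop ^ n := by
  induction n with
  | zero => simpa using op_one
  | succ n ih => rw [pow_succ, pow_succ, ← ih, Eop_eq, op_zero_mul]

lemma op0_mem (S : Subalgebra ℂ (Module.End ℂ ExpMod)) (hE : Eop ∈ S) (g : ℂ[X]) :
    op 0 g ∈ S := by
  induction g using Polynomial.induction_on' with
  | add p q hp hq =>
    have : op 0 (p + q) = opl 0 p + opl 0 q := map_add (opl 0) p q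
    rw [this]; exact add_mem hp hq
  | monomial n a =>
    rw [← C_mul_X_pow_eq_monomial, ← op_zero_mul, op_C, op_X_pow]
    exact mul_mem (S.smul_mem S.one_mem a) (pow_mem hE n)

lemma op_nat_one (m : ℕ) : op (m : ℤ) 1 = Xop ^ m := by
  induction m with
  | zero => simpa using op_one
  | succ m ih =>
    rw [pow_succ, ← ih, Xop_eq, op_mul]
    push_cast
    norm_num [one_comp]

lemma op_nonneg_mem (S : Subalgebra ℂ (Module.End ℂ ExpMod)) (hX : Xop ∈ S) (hE : Eop ∈ S)
    (m : ℕ) (g : ℂ[X]) : op (m : ℤ) g ∈ S := by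
  have : op (m : ℤ) g = op (m : ℤ) 1 * op 0 g := by
    rw [op_mul]; norm_num [one_comp]
  rw [this, op_nat_one]
  exact mul_mem (pow_mem hX m) (op0_mem S hE g)

noncomputable def qpol (l : ℕ) (z : Fin l → ℂ) (m : ℕ) : ℂ[X] :=
  ∏ n ∈ Finset.range m, ∏ i : Fin l, (X - C (z i + n))

lemma Lop_pow (l : ℕ) (z : Fin l → ℂ) (m : ℕ) :
    (Lop l z) ^ m = op (-(m : ℤ)) (qpol l z m) := by
  induction m with
  | zero => simpa [qpol] using op_one.symm
  | succ m ih =>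
    rw [pow_succ', ih, Lop_eq, op_mul]
    have hcomp : (∏ i : Fin l, (X - C (z i))).comp (X + C ((-(m:ℤ) : ℤ) : ℂ))
        = ∏ i : Fin l, (X - C (z i + m)) := by
      rw [prod_comp]
      refine Finset.prod_congr rfl (fun i _ => ?_)
      simp [sub_comp, X_comp, C_comp]
      push_cast
      ring_nf
    rw [hcomp]
    have : qpol l z (m + 1) = (∏ i : Fin l, (X - C (z i + m))) * qpol l z m := by
      rw [qpol, Finset.prod_range_succ, mul_comm, qpol]
    rw [← this]
    congr 1
    push_cast
    ring

lemma op_neg_mem (l : ℕ) (z : Fin l → ℂ) (S : Subalgebra ℂ (Module.End ℂ ExpMod))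
    (hE : Eop ∈ S) (hL : Lop l z ∈ S) (m : ℕ) (g : ℂ[X]) (hdvd : qpol l z m ∣ g) :
    op (-(m : ℤ)) g ∈ S := by
  obtain ⟨h, rfl⟩ := hdvd
  have : op (-(m : ℤ)) (qpol l z m * h) = op (-(m : ℤ)) (qpol l z m) * op 0 h := by
    rw [op_mul]; norm_num
  rw [this, ← Lop_pow]
  exact mul_mem (pow_mem hL m) (op0_mem S hE h)
lemma qpol_dvd (l : ℕ) (z : Fin l → ℂ)
    (hz : ∀ i j : Fin l, i ≠ j → ∀ n : ℤ, z i - z j ≠ (n : ℂ)) (m : ℕ) (g : ℂ[X])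
    (hroot : ∀ i : Fin l, ∀ n : ℕ, n < m → g.eval (z i + n) = 0) :
    qpol l z m ∣ g := by
  have hq : qpol l z m = ∏ p ∈ (Finset.range m) ×ˢ (Finset.univ : Finset (Fin l)),
      (X - C (z p.2 + p.1)) := by
    rw [Finset.prod_product]
    rfl
  rw [hq]
  apply Finset.prod_dvd_of_coprime
  · intro p hp q hq hpq
    have hne : z p.2 + (p.1 : ℂ) ≠ z q.2 + (q.1 : ℂ) := by
      intro heq
      by_cases h2 : p.2 = q.2
      · apply hpq
        have : (p.1 : ℂ) = (q.1 : ℂ) := by rw [h2] at heq; linear_combination heq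
        have h1 : p.1 = q.1 := Nat.cast_injective this
        exact Prod.ext h1 h2
      · exact hz p.2 q.2 h2 ((q.1 : ℤ) - (p.1 : ℤ)) (by push_cast; linear_combination heq)
    exact Polynomial.isCoprime_X_sub_C_of_isUnit_sub (Ne.isUnit (sub_ne_zero.mpr hne))
  · intro p hp
    rw [Polynomial.dvd_iff_isRoot]
    simp only [Finset.mem_product, Finset.mem_range] at hp
    exact hroot p.2 p.1 hp.1

lemma XzPoly_apply_neg (z : ℂ) (k : ℤ) (hk : k < 0) {f : ExpMod} (hf : f ∈ XzPoly z) :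
    f (z + (k : ℂ)) = 0 := by
  have : XzPoly z ≤ LinearMap.ker (Finsupp.lapply (z + (k : ℂ)) : ExpMod →ₗ[ℂ] ℂ) := by
    rw [XzPoly, Submodule.span_le]
    rintro f ⟨n, rfl⟩
    simp only [SetLike.mem_coe, LinearMap.mem_ker, Finsupp.lapply_apply]
    rw [Finsupp.single_apply]
    rw [if_neg]
    intro heq
    have : ((n : ℤ) : ℂ) = (k : ℂ) := by push_cast; linear_combination heq
    have := Int.cast_injective (α := ℂ) this
    omega
  exact this hf

lemma single_mem_XzPoly (z : ℂ) (n : ℕ) : Finsupp.single (z + n) (1 : ℂ) ∈ XzPoly z :=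
  Submodule.subset_span ⟨n, rfl⟩

lemma Psi_apply (G : ℤ →₀ ℂ[X]) : Psi G = ∑ r ∈ G.support, op r (G r) := by
  rw [Psi, Finsupp.lsum_apply]
  rfl

lemma Psi_coeff (G : ℤ →₀ ℂ[X]) (u : ℂ) (r : ℤ) :
    (Psi G (Finsupp.single u 1)) (u + (r : ℂ)) = (G r).eval u := by
  rw [Psi_apply, LinearMap.sum_apply, Finsupp.finset_sum_apply]
  rw [Finset.sum_eq_single r]
  · rw [op_single, Finsupp.smul_apply, Finsupp.single_apply, if_pos rfl]
    simp
  · intro s _ hs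
    rw [op_single, Finsupp.smul_apply, Finsupp.single_apply, if_neg, smul_zero]
    intro heq
    exact hs (Int.cast_injective (α := ℂ) (by linear_combination heq))
  · intro hr
    rw [Finsupp.notMem_support_iff.mp hr]
    simp [op_single]
lemma adjoin_rep (M : Module.End ℂ ExpMod) (hM : M ∈ Algebra.adjoin ℂ {Xop, Xinv, Dop}) :
    ∃ G : ℤ →₀ ℂ[X], M = Psi G := by
  induction hM using Algebra.adjoin_induction with
  | mem x hx =>
    rcases hx with h | h | h
    · exact ⟨Finsupp.single 1 1, by rw [h, Psi_single, Xop_eq]⟩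
    · exact ⟨Finsupp.single (-1) 1, by rw [h, Psi_single, Xinv_eq]⟩
    · rw [Set.mem_singleton_iff] at h
      exact ⟨Finsupp.single (-1) X, by rw [h, Psi_single, Dop_eq]⟩
  | algebraMap c =>
    refine ⟨Finsupp.single 0 (C c), ?_⟩
    rw [Psi_single, op_C, Algebra.algebraMap_eq_smul_one]
  | add x y hx hy ihx ihy =>
    obtain ⟨G, rfl⟩ := ihx
    obtain ⟨H, rfl⟩ := ihy
    exact ⟨G + H, (map_add Psi G H).symm⟩
  | mul x y hx hy ihx ihy =>
    obtain ⟨G, rfl⟩ := ihx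
    obtain ⟨H, rfl⟩ := ihy
    have : Psi G * Psi H ∈ LinearMap.range Psi := by
      rw [Psi_apply G, Psi_apply H, Finset.sum_mul_sum]
      apply Submodule.sum_mem
      intro r _
      apply Submodule.sum_mem
      intro s _
      rw [op_mul]
      exact ⟨Finsupp.single (r + s) _, Psi_single _ _⟩
    obtain ⟨K, hK⟩ := this
    exact ⟨K, hK.symm⟩
lemma preserves_of_gen (T : Module.End ℂ ExpMod) (z : ℂ)
    (h : ∀ n : ℕ, T (Finsupp.single (z + n) 1) ∈ XzPoly z) :
    ∀ f ∈ XzPoly z, T f ∈ XzPoly z := by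
  intro f hf
  have hle : XzPoly z ≤ Submodule.comap T (XzPoly z) := by
    rw [XzPoly, Submodule.span_le]
    rintro f ⟨n, rfl⟩
    exact h n
  exact hle hf

lemma Xop_preserves (z : ℂ) : ∀ f ∈ XzPoly z, Xop f ∈ XzPoly z := by
  apply preserves_of_gen
  intro n
  rw [Xop_eq, op_single]
  have h1 : z + (n : ℂ) + ((1 : ℤ) : ℂ) = z + ((n + 1 : ℕ) : ℂ) := by push_cast; ring
  rw [h1]
  exact Submodule.smul_mem _ _ (single_mem_XzPoly z (n + 1))

lemma Eop_preserves (z : ℂ) : ∀ f ∈ XzPoly z, Eop f ∈ XzPoly z := by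
  apply preserves_of_gen
  intro n
  rw [Eop_eq, op_single]
  have h1 : z + (n : ℂ) + ((0 : ℤ) : ℂ) = z + (n : ℂ) := by push_cast; ring
  rw [h1]
  exact Submodule.smul_mem _ _ (single_mem_XzPoly z n)

lemma Lop_preserves (l : ℕ) (z : Fin l → ℂ) (i : Fin l) :
    ∀ f ∈ XzPoly (z i), Lop l z f ∈ XzPoly (z i) := by
  apply preserves_of_gen
  intro n
  rw [Lop_eq, op_single]
  cases n with
  | zero =>
    have hz0 : (∏ j : Fin l, (X - C (z j))).eval (z i + ((0:ℕ) : ℂ)) = 0 := by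
      rw [eval_prod]
      apply Finset.prod_eq_zero (Finset.mem_univ i)
      simp
    rw [hz0]
    simp only [mul_zero, zero_smul]
    exact Submodule.zero_mem _
  | succ k =>
    have h1 : z i + ((k + 1 : ℕ) : ℂ) + ((-1 : ℤ) : ℂ) = z i + ((k : ℕ) : ℂ) := by
      push_cast; ring
    rw [h1]
    exact Submodule.smul_mem _ _ (single_mem_XzPoly (z i) k)

theorem statement0 (l : ℕ) (hl : 1 ≤ l) (z : Fin l → ℂ)
    (hz : ∀ i j : Fin l, i ≠ j → ∀ n : ℤ, z i - z j ≠ (n : ℂ)) :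
    ∀ M : Module.End ℂ ExpMod,
      M ∈ Algebra.adjoin ℂ {Xop, Eop, Lop l z} ↔
        (M ∈ Algebra.adjoin ℂ {Xop, Xinv, Dop} ∧
          ∀ i : Fin l, ∀ f ∈ XzPoly (z i), M f ∈ XzPoly (z i)) := by
  intro M
  have hXmem : Xop ∈ Algebra.adjoin ℂ {Xop, Eop, Lop l z} :=
    Algebra.subset_adjoin (Set.mem_insert _ _)
  have hEmem : Eop ∈ Algebra.adjoin ℂ {Xop, Eop, Lop l z} :=
    Algebra.subset_adjoin (Set.mem_insert_of_mem _ (Set.mem_insert _ _))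
  have hLmem : Lop l z ∈ Algebra.adjoin ℂ {Xop, Eop, Lop l z} :=
    Algebra.subset_adjoin (Set.mem_insert_of_mem _ (Set.mem_insert_of_mem _ rfl))
  constructor
  · intro hM
    constructor
    · -- M lies in the full algebra of differential operators
      have hsub : ({Xop, Eop, Lop l z} : Set (Module.End ℂ ExpMod)) ⊆
          Algebra.adjoin ℂ {Xop, Xinv, Dop} := by
        have hX : Xop ∈ Algebra.adjoin ℂ {Xop, Xinv, Dop} :=
          Algebra.subset_adjoin (Set.mem_insert _ _)
        have hXi : Xinv ∈ Algebra.adjoin ℂ {Xop, Xinv, Dop} :=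
          Algebra.subset_adjoin (Set.mem_insert_of_mem _ (Set.mem_insert _ _))
        have hD : Dop ∈ Algebra.adjoin ℂ {Xop, Xinv, Dop} :=
          Algebra.subset_adjoin (Set.mem_insert_of_mem _ (Set.mem_insert_of_mem _ rfl))
        have hE : Eop ∈ Algebra.adjoin ℂ {Xop, Xinv, Dop} := mul_mem hX hD
        rintro x (rfl | rfl | rfl)
        · exact hX
        · exact hE
        · rw [Lop_eq]
          have heq : op (-1) (∏ i : Fin l, (X - C (z i)))
              = Xinv * op 0 (∏ i : Fin l, (X - C (z i))) := by
            rw [Xinv_eq, op_mul]; norm_num [one_comp]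
          rw [heq]
          exact mul_mem hXi (op0_mem _ hE _)
      exact Algebra.adjoin_le hsub hM
    · -- M preserves each X^{z_i}ℂ[X]
      induction hM using Algebra.adjoin_induction with
      | mem x hx =>
        rcases hx with rfl | rfl | rfl
        · exact fun i => Xop_preserves (z i)
        · exact fun i => Eop_preserves (z i)
        · exact fun i => Lop_preserves l z i
      | algebraMap c =>
        intro i f hf
        rw [Module.algebraMap_end_apply]
        exact Submodule.smul_mem _ _ hf
      | add x y hx hy ihx ihy =>
        intro i f hf
        rw [LinearMap.add_apply]
        exact Submodule.add_mem _ (ihx i f hf) (ihy i f hf)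
      | mul x y hx hy ihx ihy =>
        intro i f hf
        exact ihx i _ (ihy i f hf)
  · rintro ⟨hA, hP⟩
    obtain ⟨G, rfl⟩ := adjoin_rep M hA
    rw [Psi_apply]
    apply Subalgebra.sum_mem
    intro r _
    rcases le_or_gt 0 r with hr | hr
    · have : r = ((r.toNat : ℕ) : ℤ) := (Int.toNat_of_nonneg hr).symm
      rw [this]
      exact op_nonneg_mem _ hXmem hEmem _ _
    · set m : ℕ := (-r).toNat with hm
      have hrm : r = -(m : ℤ) := by omega
      have hroot : ∀ i : Fin l, ∀ n : ℕ, n < m → (G r).eval (z i + n) = 0 := by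
        intro i n hn
        have hmem := hP i (Finsupp.single (z i + n) 1) (single_mem_XzPoly (z i) n)
        have hpt : (z i + (n : ℂ)) + (r : ℂ) = z i + (((n : ℤ) + r : ℤ) : ℂ) := by
          push_cast; ring
        have hzero := XzPoly_apply_neg (z i) ((n : ℤ) + r) (by omega) hmem
        rw [← Psi_coeff G (z i + n) r, hpt]
        exact hzero
      have hdvd := qpol_dvd l z hz m (G r) hroot
      rw [hrm] at hdvd ⊢
      exact op_neg_mem l z _ hEmem hLmem m _ hdvd

end
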